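/- arXiv:1810.11849 — 3 statements merged into one kernel-verified Lean document; each statement's English description precedes it below -/
import Mathlib

section
/- In the cross-holdings network model, the total value available to outside investors equals the total value of external assets: Σ_i [(1 − Σ_j M^s_{ji}) s_i + (1 − Σ_j M^d_{ji}) r_i] = Σ_i a_i, whenever (s,r) satisfies the network valuation fixed-point equations. -/
theorem outside_value_equals_external_assets {n : ℕ}
    (Ms Md : Matrix (Fin n) (Fin n) ℝ) (a d s r : Fin n → ℝ)
    (ha : ∀ i, 0 < a i) (hd : ∀ i, 0 < d i)
    (hs : ∀ i, s i = max 0 (a i + (∑ j, Ms i j * s j) + (∑ j, Md i j * r j) - d i))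
    (hr : ∀ i, r i = min (d i) (a i + (∑ j, Ms i j * s j) + (∑ j, Md i j * r j))) :
    ∑ i, ((1 - ∑ j, Ms j i) * s i + (1 - ∑ j, Md j i) * r i) = ∑ i, a i := by
  have key : ∀ i, s i + r i
      = a i + (∑ j, Ms i j * s j) + (∑ j, Md i j * r j) := by
    intro i
    rw [hs i, hr i]
    rcases le_total (a i + (∑ j, Ms i j * s j) + (∑ j, Md i j * r j)) (d i) with h | h
    · rw [max_eq_left (by linarith), min_eq_right h]; ring
    · rw [max_eq_right (by linarith), min_eq_left h]; ring
  have hsum : ∑ i, (s i + r i)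
      = ∑ i, a i + ∑ i, ∑ j, Ms i j * s j + ∑ i, ∑ j, Md i j * r j := by
    simp_rw [key, Finset.sum_add_distrib]
  have h1 : ∑ i, (∑ j, Ms j i) * s i = ∑ i, ∑ j, Ms i j * s j := by
    rw [Finset.sum_comm]
    exact Finset.sum_congr rfl fun i _ => Finset.sum_mul _ _ _
  have h2 : ∑ i, (∑ j, Md j i) * r i = ∑ i, ∑ j, Md i j * r j := by
    rw [Finset.sum_comm]
    exact Finset.sum_congr rfl fun i _ => Finset.sum_mul _ _ _
  have expand : ∑ i, ((1 - ∑ j, Ms j i) * s i + (1 - ∑ j, Md j i) * r i)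
      = ∑ i, (s i + r i) - (∑ i, (∑ j, Ms j i) * s i + ∑ i, (∑ j, Md j i) * r i) := by
    rw [← Finset.sum_add_distrib, ← Finset.sum_sub_distrib]
    exact Finset.sum_congr rfl fun i _ => by ring
  rw [expand, hsum, h1, h2]; ring
end

section
/- In the symmetric one-dimensional reduction of the network model, the fixed point equations s = max{0, a + w^s s + w^d r − d}, r = min{d, a + w^s s + w^d r} with 0 ≤ w^s, w^d < 1, a > 0, d > 0 have a unique nonnegative solution given by: if a > (1−w^d) d then s* = (a − (1−w^d)d)/(1−w^s) and r* = d; if a ≤ (1−w^d) d then s* = 0 and r* = a/(1−w^d). -/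
theorem symmetric_fixed_point_solution (a d ws wd : ℝ)
    (ha : 0 < a) (hd : 0 < d)
    (hws0 : 0 ≤ ws) (hws1 : ws < 1) (hwd0 : 0 ≤ wd) (hwd1 : wd < 1)
    (s r : ℝ) :
    (s = max 0 (a + ws * s + wd * r - d) ∧ r = min d (a + ws * s + wd * r)
        ∧ 0 ≤ s ∧ 0 ≤ r)
    ↔ (if (1 - wd) * d < a
        then s = (a - (1 - wd) * d) / (1 - ws) ∧ r = d
        else s = 0 ∧ r = a / (1 - wd)) := by
  have hws : 0 < 1 - ws := by linarith
  have hwd : 0 < 1 - wd := by linarith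
  constructor
  · rintro ⟨h1, h2, hs, hr⟩
    rcases eq_or_lt_of_le hs with hs0 | hs0
    · -- s = 0
      have hs0' : s = 0 := hs0.symm
      subst hs0'
      have hle : a + ws * 0 + wd * r - d ≤ 0 := by
        by_contra h
        push_neg at h
        rw [max_eq_right h.le] at h1
        linarith
      have hle' : a + ws * 0 + wd * r ≤ d := by linarith
      rw [min_eq_right hle'] at h2
      have hr' : r = a / (1 - wd) := by
        field_simp
        nlinarith [h2]
      have hcond : ¬ (1 - wd) * d < a := by
        push_neg
        have : r ≤ d := by nlinarith
        rw [hr'] at this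
        rw [div_le_iff₀ hwd] at this
        linarith
      rw [if_neg hcond]
      exact ⟨rfl, hr'⟩
    · -- s > 0
      have heq : s = a + ws * s + wd * r - d := by
        rcases le_or_gt (a + ws * s + wd * r - d) 0 with h | h
        · rw [max_eq_left h] at h1; linarith
        · rw [max_eq_right h.le] at h1; exact h1
      have hTd : d ≤ a + ws * s + wd * r := by linarith
      have hrd : r = d := by rw [min_eq_left hTd] at h2; exact h2
      subst hrd
      have hcond : (1 - wd) * r < a := by nlinarith
      rw [if_pos hcond]
      constructor
      · field_simp
        linarith
      · rfl
  · intro h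
    split_ifs at h with hc
    · obtain ⟨hs', hr'⟩ := h
      have hspos : 0 < s := by
        rw [hs']; exact div_pos (by linarith) hws
      have hfix : a + ws * s + wd * r - d = s := by
        rw [hs', hr']; field_simp; ring
      refine ⟨?_, ?_, hspos.le, by rw [hr']; exact hd.le⟩
      · rw [max_eq_right (by linarith)]
        linarith
      · rw [min_eq_left (by linarith)]
        exact hr'
    · push_neg at hc
      obtain ⟨hs', hr'⟩ := h
      subst hs'
      have hfix : a + ws * 0 + wd * r = r := by
        rw [hr']; field_simp; ring
      have hrd : r ≤ d := by
        rw [hr', div_le_iff₀ hwd]; linarith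
      have hrpos : 0 < r := by rw [hr']; positivity
      refine ⟨?_, ?_, le_refl 0, hrpos.le⟩
      · rw [max_eq_left (by linarith)]
      · rw [min_eq_right (by linarith)]
        linarith
end

section
/- Debt-only network case (threat index identity): with M^s = 0, the row vector of partial derivatives of aggregate debt repayments V = Σ_i r_i with respect to external assets satisfies ∂V/∂a = 1ᵀ (I − diag(1−ξ) M^d)^{−1} diag(1−ξ), where ξ is the solvency indicator, i.e. the algebraic identity (0; 1)ᵀ (I_{2n} − diag(ξ;1−ξ) [[0, M^d],[0, M^d]])^{−1} (diag(ξ); diag(1−ξ)) = 1ᵀ (I_n − diag(1−ξ) M^d)^{−1} diag(1−ξ) holds for any nonnegative M^d with column sums less than 1 and any ξ ∈ {0,1}^n. -/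
open Matrix

theorem threat_index_identity {n : ℕ} (Md : Matrix (Fin n) (Fin n) ℝ)
    (hMd0 : ∀ i j, 0 ≤ Md i j) (hMdcol : ∀ j, ∑ i, Md i j < 1)
    (ξ : Fin n → ℝ) (hξ : ∀ i, ξ i = 0 ∨ ξ i = 1) :
    Matrix.vecMul (Sum.elim (0 : Fin n → ℝ) (1 : Fin n → ℝ))
      ((1 - Matrix.diagonal (Sum.elim ξ (fun i => 1 - ξ i)) *
          Matrix.fromBlocks 0 Md 0 Md)⁻¹ *
        Matrix.of (Sum.elim (fun i => Matrix.diagonal ξ i)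
          (fun i => Matrix.diagonal (fun k => 1 - ξ k) i)))
    = Matrix.vecMul (1 : Fin n → ℝ)
        ((1 - Matrix.diagonal (fun i => 1 - ξ i) * Md)⁻¹ *
          Matrix.diagonal (fun i => 1 - ξ i)) := by
  set D1 : Matrix (Fin n) (Fin n) ℝ := Matrix.diagonal ξ with hD1
  set D2 : Matrix (Fin n) (Fin n) ℝ := Matrix.diagonal (fun i => 1 - ξ i) with hD2
  set B : Matrix (Fin n) (Fin n) ℝ := 1 - D2 * Md with hB
  -- entries of D2*Md are nonneg, column sums < 1
  have hξ01 : ∀ i, 0 ≤ 1 - ξ i ∧ 1 - ξ i ≤ 1 := by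
    intro i; rcases hξ i with h | h <;> simp [h]
  have hN0 : ∀ i j, 0 ≤ (D2 * Md) i j := by
    intro i j
    simp only [hD2, Matrix.mul_apply, Matrix.diagonal_apply]
    refine Finset.sum_nonneg fun k _ => ?_
    by_cases h : i = k
    · subst h; simpa using mul_nonneg (hξ01 i).1 (hMd0 i j)
    · simp [h]
  have hNcol : ∀ j, ∑ i, (D2 * Md) i j < 1 := by
    intro j
    calc ∑ i, (D2 * Md) i j ≤ ∑ i, Md i j := by
          refine Finset.sum_le_sum fun i _ => ?_
          simp only [hD2, Matrix.mul_apply, Matrix.diagonal_apply]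
          rw [Finset.sum_eq_single i (by intro k _ hk; simp [Ne.symm hk]) (by simp)]
          simpa using mul_le_of_le_one_left (hMd0 i j) (hξ01 i).2
      _ < 1 := hMdcol j
  -- B is invertible by column diagonal dominance
  have hBdet : B.det ≠ 0 := by
    apply det_ne_zero_of_sum_col_lt_diag
    intro k
    have h1 : ∀ i ∈ Finset.univ.erase k, ‖B i k‖ = (D2 * Md) i k := by
      intro i hi
      have : i ≠ k := (Finset.mem_erase.mp hi).1
      simp [hB, Matrix.one_apply, this, Real.norm_eq_abs, abs_of_nonneg (hN0 i k)]
    rw [Finset.sum_congr rfl h1]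
    have hsum := hNcol k
    have hterm : (D2 * Md) k k ≤ ∑ i, (D2 * Md) i k :=
      Finset.single_le_sum (fun i _ => hN0 i k) (Finset.mem_univ k)
    have hBkk : B k k = 1 - (D2 * Md) k k := by simp [hB, Matrix.one_apply]
    have h2 : ∑ i ∈ Finset.univ.erase k, (D2 * Md) i k
        = (∑ i, (D2 * Md) i k) - (D2 * Md) k k := by
      rw [Finset.sum_erase_eq_sub (Finset.mem_univ k)]
    rw [h2, hBkk, Real.norm_eq_abs, abs_of_pos (by linarith)]
    linarith
  have hBunit : IsUnit B.det := isUnit_iff_ne_zero.mpr hBdet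
  -- the big matrix is a block triangular matrix
  have hbig : (1 : Matrix (Fin n ⊕ Fin n) (Fin n ⊕ Fin n) ℝ) -
      Matrix.diagonal (Sum.elim ξ (fun i => 1 - ξ i)) * Matrix.fromBlocks 0 Md 0 Md
      = Matrix.fromBlocks 1 (-(D1 * Md)) 0 B := by
    rw [← Matrix.fromBlocks_diagonal, Matrix.fromBlocks_multiply, ← Matrix.fromBlocks_one,
      hB, sub_eq_add_neg, sub_eq_add_neg, Matrix.fromBlocks_neg, Matrix.fromBlocks_add]
    congr 1 <;> simp [hD1, hD2]
  rw [hbig]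
  set A : Matrix (Fin n ⊕ Fin n) (Fin n ⊕ Fin n) ℝ := Matrix.fromBlocks 1 (-(D1 * Md)) 0 B
    with hA
  have hAdet : IsUnit A.det := by
    rw [hA, Matrix.det_fromBlocks_zero₂₁]
    simpa using hBunit
  set w : Fin n → ℝ := Matrix.vecMul 1 B⁻¹ with hw
  have hwB : Matrix.vecMul w B = 1 := by
    rw [hw, Matrix.vecMul_vecMul, Matrix.nonsing_inv_mul B hBunit, Matrix.vecMul_one]
  set u : Fin n ⊕ Fin n → ℝ := Sum.elim (0 : Fin n → ℝ) w with hu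
  have huA : Matrix.vecMul u A = Sum.elim (0 : Fin n → ℝ) (1 : Fin n → ℝ) := by
    rw [hu, hA, Matrix.vecMul_fromBlocks]
    simp [hwB]
  have hkey : Matrix.vecMul (Sum.elim (0 : Fin n → ℝ) (1 : Fin n → ℝ)) A⁻¹ = u := by
    rw [← huA, Matrix.vecMul_vecMul, Matrix.mul_nonsing_inv A hAdet, Matrix.vecMul_one]
  rw [← Matrix.vecMul_vecMul]
  erw [← Matrix.vecMul_vecMul]
  rw [hkey, ← hw]
  funext j
  simp only [Matrix.vecMul, dotProduct, hu, Fintype.sum_sum_type, Sum.elim_inl,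
    Sum.elim_inr, Matrix.of_apply, Pi.zero_apply, zero_mul, Finset.sum_const_zero, zero_add]
end
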